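/- arXiv:1811.02229 — 4 statements merged into one kernel-verified Lean document; each statement's English description precedes it below -/
import Mathlib

section
/- Let m ≥ 2 and let S be a real symmetric m×m matrix with Σ_{i,j=1}^m S_{ij} = 0. Then there exist a unique real symmetric (m−1)×(m−1) matrix S̃ and unique real numbers d₁,…,d_{m−1} such that S equals the matrix obtained by embedding S̃ in the bottom-right (m−1)×(m−1) block (with zeros in the first row and column), minus the matrix obtained by embedding S̃ in the top-left (m−1)×(m−1) block (with zeros in the last row and column), plus Σ_{ℓ=1}^{m−1} d_ℓ E_ℓ, where E_ℓ is the m×m matrix with entries (E_ℓ)_{11} = (E_ℓ)_{1+ℓ,1+ℓ} = 1, (E_ℓ)_{1,1+ℓ} = (E_ℓ)_{1+ℓ,1} = −1, and all other entries zero. -/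
/-- Embedding of an `(m-1) × (m-1)` matrix into the bottom-right block of an
`m × m` matrix (with zeros in the first row and column), `m = n + 2`. -/
noncomputable def embedBR {n : ℕ} (S : Matrix (Fin (n + 1)) (Fin (n + 1)) ℝ) :
    Matrix (Fin (n + 2)) (Fin (n + 2)) ℝ :=
  Matrix.of fun i j =>
    if hi : 0 < i.val then
      if hj : 0 < j.val then
        S ⟨i.val - 1, by have := i.isLt; omega⟩ ⟨j.val - 1, by have := j.isLt; omega⟩
      else 0
    else 0

/-- Embedding of an `(m-1) × (m-1)` matrix into the top-left block of an
`m × m` matrix (with zeros in the last row and column), `m = n + 2`. -/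
noncomputable def embedTL {n : ℕ} (S : Matrix (Fin (n + 1)) (Fin (n + 1)) ℝ) :
    Matrix (Fin (n + 2)) (Fin (n + 2)) ℝ :=
  Matrix.of fun i j =>
    if hi : i.val < n + 1 then
      if hj : j.val < n + 1 then S ⟨i.val, hi⟩ ⟨j.val, hj⟩ else 0
    else 0

/-- The matrix `E_ℓ` of the quadratic form `(v₁ - v_{1+ℓ})²`:
entries `1` at `(1,1)` and `(1+ℓ,1+ℓ)`, `-1` at `(1,1+ℓ)` and `(1+ℓ,1)`, `0` elsewhere. -/
noncomputable def Emat {n : ℕ} (ℓ : Fin (n + 1)) : Matrix (Fin (n + 2)) (Fin (n + 2)) ℝ :=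
  Matrix.of fun i j =>
    if i = 0 ∧ j = 0 then 1
    else if i = ℓ.succ ∧ j = ℓ.succ then 1
    else if (i = 0 ∧ j = ℓ.succ) ∨ (i = ℓ.succ ∧ j = 0) then -1
    else 0

/-!
Let `V` be the zero extension of `embedBR T` to `ℕ × ℕ`. The zero extension of `embedTL T` is
its diagonal shift `(i, j) ↦ V (i + 1) (j + 1)`, so `S = embedBR T - embedTL T + D` with
`D = ∑ d_ℓ E_ℓ` says that `S - D` is `V` minus its shift. Because `V` vanishes far out, `V` is
then the sum of `S - D` along the diagonal running down and to the right. In the first row `V`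
vanishes and `D` contributes only `-d_j` to the diagonal through `(0, j + 1)`, so this determines
`d`, and the entries `(i + 1, j + 1)` then determine `T`. Conversely, these formulas reproduce `S`
at every entry except `(0, 0)` (on the first column by symmetry of `S`); since both sides have
total sum zero, they agree at `(0, 0)` as well.
-/

open Finset Matrix

namespace Matrix

variable {α : Type*} {m m' : ℕ}

def extendByZero [Zero α] (A : Matrix (Fin m) (Fin m') α) (i j : ℕ) : α :=
  if h : i < m ∧ j < m' then A ⟨i, h.1⟩ ⟨j, h.2⟩ else 0

@[simp]
lemma extendByZero_coe [Zero α] (A : Matrix (Fin m) (Fin m') α) (i : Fin m) (j : Fin m') :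
    A.extendByZero i j = A i j := by
  simp [extendByZero]

lemma extendByZero_sub [AddGroup α] (A B : Matrix (Fin m) (Fin m') α) :
    (A - B).extendByZero = A.extendByZero - B.extendByZero := by
  ext i j
  simp only [extendByZero, Pi.sub_apply]
  split_ifs <;> simp

lemma extendByZero_add [AddZeroClass α] (A B : Matrix (Fin m) (Fin m') α) :
    (A + B).extendByZero = A.extendByZero + B.extendByZero := by
  ext i j
  simp only [extendByZero, Pi.add_apply]
  split_ifs <;> simp

lemma IsSymm.extendByZero_comm [Zero α] {A : Matrix (Fin m) (Fin m) α} (hA : A.IsSymm)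
    (i j : ℕ) : A.extendByZero i j = A.extendByZero j i := by
  unfold extendByZero
  split_ifs <;> first | exact hA.apply _ _ | tauto

lemma eq_of_sum_eq_of_apply_eq_of_ne {ι κ : Type*} [Fintype ι] [Fintype κ] [AddCommGroup α]
    {A B : Matrix ι κ α} {p : ι} {q : κ} (hsum : ∑ i, ∑ j, A i j = ∑ i, ∑ j, B i j)
    (h : ∀ i j, (i, j) ≠ (p, q) → A i j = B i j) : A = B := by
  have hpq : A p q = B p q := by
    have h0 : ∑ i, ∑ j, (A i j - B i j) = 0 := by simp [sum_sub_distrib, hsum]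
    rwa [sum_eq_single p (fun i _ hi => sum_eq_zero fun j _ => sub_eq_zero.2 (h i j (by simp [hi])))
      (by simp), sum_eq_single q (fun j _ hj => sub_eq_zero.2 (h p j (by simp [hj]))) (by simp),
      sub_eq_zero] at h0
  ext i j
  by_cases hij : (i, j) = (p, q)
  · simp only [Prod.mk.injEq] at hij
    rw [hij.1, hij.2, hpq]
  · exact h i j hij

end Matrix

def VanishesBeyond {α : Type*} [Zero α] (N : ℕ) (f : ℕ → ℕ → α) : Prop :=
  ∀ i j, N ≤ i ∨ N ≤ j → f i j = 0

lemma Matrix.vanishesBeyond_extendByZero {α : Type*} [Zero α] {m : ℕ}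
    (A : Matrix (Fin m) (Fin m) α) : VanishesBeyond m A.extendByZero := by
  intro i j h
  simp only [extendByZero]
  rw [dif_neg (by omega)]

lemma Matrix.extendByZero_of {α : Type*} [Zero α] {m : ℕ} {f : ℕ → ℕ → α}
    (hf : VanishesBeyond m f) : (of fun a b : Fin m => f a b).extendByZero = f := by
  ext i j
  unfold extendByZero
  split_ifs with h
  · rfl
  · exact (hf i j (by omega)).symm

section DiagTail

variable {α : Type*} [AddCommGroup α] (N : ℕ)

def diagTail (f : ℕ → ℕ → α) (i j : ℕ) : α :=
  ∑ k ∈ range N, f (i + k) (j + k)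

variable {N}

lemma diagTail_sub (f g : ℕ → ℕ → α) (i j : ℕ) :
    diagTail N (f - g) i j = diagTail N f i j - diagTail N g i j :=
  sum_sub_distrib _ _

lemma diagTail_comm {f : ℕ → ℕ → α} (hf : ∀ i j, f i j = f j i) (i j : ℕ) :
    diagTail N f i j = diagTail N f j i :=
  sum_congr rfl fun _ _ => hf _ _

lemma VanishesBeyond.diagTail {f : ℕ → ℕ → α} (hf : VanishesBeyond N f) :
    VanishesBeyond N (diagTail N f) :=
  fun _ _ h => sum_eq_zero fun _ _ => hf _ _ (by omega)

lemma diagTail_sub_diagTail_succ {f : ℕ → ℕ → α} (hf : VanishesBeyond N f) (i j : ℕ) :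
    diagTail N f i j - diagTail N f (i + 1) (j + 1) = f i j := by
  have h := (sum_range_succ' (fun k => f (i + k) (j + k)) N).symm.trans
    (sum_range_succ (fun k => f (i + k) (j + k)) N)
  rw [hf (i + N) (j + N) (by omega), add_zero, add_zero, add_zero] at h
  rw [diagTail, diagTail, ← h]
  simp only [show ∀ a k : ℕ, a + 1 + k = a + (k + 1) by omega]
  abel

lemma eq_diagTail_of_sub_shift {f g : ℕ → ℕ → α} (hg : VanishesBeyond N g)
    (hfg : ∀ i j, g i j - g (i + 1) (j + 1) = f i j) : g = diagTail N f := by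
  ext i j
  have h := sum_range_sub' (fun k => g (i + k) (j + k)) N
  simp only [add_zero, hg (i + N) (j + N) (by omega), sub_zero] at h
  rw [← h, diagTail]
  exact sum_congr rfl fun k _ => hfg _ _

end DiagTail

section Decomposition

variable {n : ℕ}

lemma Emat_eq_vecMulVec (ℓ : Fin (n + 1)) :
    Emat ℓ =
      vecMulVec (Pi.single 0 1 - Pi.single ℓ.succ 1) (Pi.single 0 1 - Pi.single ℓ.succ 1) := by
  ext i j
  simp only [Emat, of_apply, vecMulVec_apply, Pi.sub_apply, Pi.single_apply]
  have := Fin.succ_ne_zero ℓ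
  split_ifs <;> simp_all [eq_comm]

lemma Emat_isSymm (ℓ : Fin (n + 1)) : (Emat ℓ).IsSymm := by
  rw [Emat_eq_vecMulVec, IsSymm, transpose_vecMulVec]

lemma sum_Emat (ℓ : Fin (n + 1)) : ∑ i, ∑ j, Emat ℓ i j = 0 := by
  simp [Emat_eq_vecMulVec, vecMulVec_apply, ← mul_sum, sum_sub_distrib]

noncomputable def weightedEmat (d : Fin (n + 1) → ℝ) : Matrix (Fin (n + 2)) (Fin (n + 2)) ℝ :=
  ∑ ℓ, d ℓ • Emat ℓ

lemma weightedEmat_zero_succ (d : Fin (n + 1) → ℝ) (j : Fin (n + 1)) :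
    weightedEmat d 0 j.succ = -d j := by
  simp [weightedEmat, Matrix.sum_apply, Emat, Fin.succ_ne_zero, eq_comm]

lemma weightedEmat_of_ne {d : Fin (n + 1) → ℝ} {i j : Fin (n + 2)} (hi : i ≠ 0) (hj : j ≠ 0)
    (hij : i ≠ j) : weightedEmat d i j = 0 := by
  refine Matrix.sum_apply .. |>.trans (sum_eq_zero fun ℓ _ => ?_)
  simp only [Matrix.smul_apply, Emat, of_apply, hi, hj, false_and, and_false, or_self, if_false]
  rw [if_neg (fun h => hij (h.1.trans h.2.symm)), smul_zero]

lemma weightedEmat_isSymm (d : Fin (n + 1) → ℝ) : (weightedEmat d).IsSymm := by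
  simp only [weightedEmat, IsSymm, transpose_sum, transpose_smul, (Emat_isSymm _).eq]

lemma sum_weightedEmat (d : Fin (n + 1) → ℝ) : ∑ i, ∑ j, weightedEmat d i j = 0 := by
  simp only [weightedEmat, Matrix.sum_apply, Matrix.smul_apply, smul_eq_mul]
  rw [sum_congr rfl fun i _ => sum_comm, sum_comm]
  simp [← mul_sum, sum_Emat]

lemma diagTail_weightedEmat_zero_succ (d : Fin (n + 1) → ℝ) (j : Fin (n + 1)) :
    diagTail (n + 2) (weightedEmat d).extendByZero 0 (j + 1) = -d j := by
  rw [diagTail, sum_eq_single 0]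
  · have := extendByZero_coe (weightedEmat d) 0 j.succ
    rw [weightedEmat_zero_succ, Fin.val_zero, Fin.val_succ] at this
    simpa only [add_zero] using this
  · intro k _ hk
    unfold extendByZero
    split_ifs
    · exact weightedEmat_of_ne (Fin.ne_of_val_ne (by simpa using hk))
        (Fin.ne_of_val_ne (by simp)) (Fin.ne_of_val_ne (by simp))
    · rfl
  · simp

lemma extendByZero_embedTL (T : Matrix (Fin (n + 1)) (Fin (n + 1)) ℝ) (i j : ℕ) :
    (embedTL T).extendByZero i j = T.extendByZero i j := by
  simp only [extendByZero, embedTL, of_apply]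
  split_ifs <;> first | rfl | omega

lemma extendByZero_embedBR_succ_succ (T : Matrix (Fin (n + 1)) (Fin (n + 1)) ℝ) (i j : ℕ) :
    (embedBR T).extendByZero (i + 1) (j + 1) = T.extendByZero i j := by
  simp only [extendByZero, embedBR, of_apply]
  split_ifs <;> first | rfl | omega

lemma extendByZero_embedBR_zero_left (T : Matrix (Fin (n + 1)) (Fin (n + 1)) ℝ) (j : ℕ) :
    (embedBR T).extendByZero 0 j = 0 := by
  simp [extendByZero, embedBR]

lemma extendByZero_embedBR_zero_right (T : Matrix (Fin (n + 1)) (Fin (n + 1)) ℝ) (i : ℕ) :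
    (embedBR T).extendByZero i 0 = 0 := by
  simp [extendByZero, embedBR]

lemma sum_embedBR (T : Matrix (Fin (n + 1)) (Fin (n + 1)) ℝ) :
    ∑ i, ∑ j, embedBR T i j = ∑ i, ∑ j, T i j := by
  simp [Fin.sum_univ_succ, embedBR]

lemma sum_embedTL (T : Matrix (Fin (n + 1)) (Fin (n + 1)) ℝ) :
    ∑ i, ∑ j, embedTL T i j = ∑ i, ∑ j, T i j := by
  simp [Fin.sum_univ_castSucc, embedTL]

noncomputable def assemble (T : Matrix (Fin (n + 1)) (Fin (n + 1)) ℝ) (d : Fin (n + 1) → ℝ) :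
    Matrix (Fin (n + 2)) (Fin (n + 2)) ℝ :=
  embedBR T - embedTL T + weightedEmat d

lemma sum_assemble (T : Matrix (Fin (n + 1)) (Fin (n + 1)) ℝ) (d : Fin (n + 1) → ℝ) :
    ∑ i, ∑ j, assemble T d i j = 0 := by
  simp only [assemble, Matrix.add_apply, Matrix.sub_apply, sum_add_distrib, sum_sub_distrib,
    sum_embedBR, sum_embedTL, sum_weightedEmat, sub_self, add_zero]

lemma extendByZero_assemble (T : Matrix (Fin (n + 1)) (Fin (n + 1)) ℝ) (d : Fin (n + 1) → ℝ)
    (i j : ℕ) :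
    (assemble T d).extendByZero i j =
      (embedBR T).extendByZero i j - (embedBR T).extendByZero (i + 1) (j + 1) +
        (weightedEmat d).extendByZero i j := by
  rw [assemble, extendByZero_add, extendByZero_sub, Pi.add_apply, Pi.add_apply, Pi.sub_apply,
    Pi.sub_apply, extendByZero_embedTL, extendByZero_embedBR_succ_succ]

variable (S : Matrix (Fin (n + 2)) (Fin (n + 2)) ℝ)

noncomputable def decompCoeff (j : Fin (n + 1)) : ℝ :=
  -diagTail (n + 2) S.extendByZero 0 (j + 1)

noncomputable def blockTail (d : Fin (n + 1) → ℝ) : ℕ → ℕ → ℝ :=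
  diagTail (n + 2) (S - weightedEmat d).extendByZero

noncomputable def decompBlock : Matrix (Fin (n + 1)) (Fin (n + 1)) ℝ :=
  of fun a b => blockTail S (decompCoeff S) (a + 1) (b + 1)

variable {S}

lemma blockTail_zero_succ (d : Fin (n + 1) → ℝ) (j : Fin (n + 1)) :
    blockTail S d 0 (j + 1) = d j - decompCoeff S j := by
  rw [blockTail, extendByZero_sub, diagTail_sub, diagTail_weightedEmat_zero_succ, decompCoeff]
  ring

lemma blockTail_comm (hS : S.IsSymm) (d : Fin (n + 1) → ℝ) (i j : ℕ) :
    blockTail S d i j = blockTail S d j i :=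
  diagTail_comm (hS.sub (weightedEmat_isSymm d)).extendByZero_comm i j

lemma vanishesBeyond_blockTail (d : Fin (n + 1) → ℝ) : VanishesBeyond (n + 2) (blockTail S d) :=
  (vanishesBeyond_extendByZero _).diagTail

lemma blockTail_sub_blockTail_succ (d : Fin (n + 1) → ℝ) (i j : ℕ) :
    blockTail S d i j - blockTail S d (i + 1) (j + 1) =
      S.extendByZero i j - (weightedEmat d).extendByZero i j := by
  rw [blockTail, diagTail_sub_diagTail_succ (vanishesBeyond_extendByZero _), extendByZero_sub,
    Pi.sub_apply, Pi.sub_apply]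

lemma decompBlock_isSymm (hS : S.IsSymm) : (decompBlock S).IsSymm :=
  IsSymm.ext fun _ _ => blockTail_comm hS _ _ _

lemma eq_decompBlock_and_eq_decompCoeff {T : Matrix (Fin (n + 1)) (Fin (n + 1)) ℝ}
    {d : Fin (n + 1) → ℝ} (h : S = assemble T d) : T = decompBlock S ∧ d = decompCoeff S := by
  have hV : (embedBR T).extendByZero = blockTail S d :=
    eq_diagTail_of_sub_shift (vanishesBeyond_extendByZero _) fun i j => by
      rw [extendByZero_sub, Pi.sub_apply, Pi.sub_apply, h, extendByZero_assemble]
      ring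
  have hd : d = decompCoeff S := funext fun j => by
    have h0 := congrFun₂ hV 0 (j + 1)
    rw [extendByZero_embedBR_zero_left, blockTail_zero_succ] at h0
    linarith
  subst hd
  refine ⟨ext fun a b => ?_, rfl⟩
  rw [← extendByZero_coe T, ← extendByZero_embedBR_succ_succ, hV]
  rfl

lemma assemble_decompBlock_decompCoeff (hS : S.IsSymm) (hsum : ∑ i, ∑ j, S i j = 0) :
    assemble (decompBlock S) (decompCoeff S) = S := by
  have hW := vanishesBeyond_blockTail (S := S) (decompCoeff S)
  have hrow (j : ℕ) : blockTail S (decompCoeff S) 0 (j + 1) = 0 := by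
    by_cases hj : j < n + 1
    · simpa using blockTail_zero_succ (S := S) (decompCoeff S) ⟨j, hj⟩
    · exact hW _ _ (by omega)
  have hV (i j : ℕ) (hij : (i, j) ≠ (0, 0)) :
      (embedBR (decompBlock S)).extendByZero i j = blockTail S (decompCoeff S) i j := by
    rcases i with _ | i <;> rcases j with _ | j
    · exact absurd rfl hij
    · rw [extendByZero_embedBR_zero_left, hrow]
    · rw [extendByZero_embedBR_zero_right, blockTail_comm hS, hrow]
    · rw [extendByZero_embedBR_succ_succ]
      exact congrFun₂ (extendByZero_of
        (f := fun a b => blockTail S (decompCoeff S) (a + 1) (b + 1))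
        fun a b _ => hW _ _ (by omega)) i j
  refine eq_of_sum_eq_of_apply_eq_of_ne (p := 0) (q := 0) (by rw [sum_assemble, hsum])
    fun i j hij => ?_
  have hij' : ((i : ℕ), (j : ℕ)) ≠ (0, 0) := fun h =>
    hij (Prod.ext (Fin.ext (congrArg Prod.fst h)) (Fin.ext (congrArg Prod.snd h)))
  rw [← extendByZero_coe (assemble _ _), ← extendByZero_coe S, extendByZero_assemble,
    hV _ _ hij', hV _ _ (by simp), blockTail_sub_blockTail_succ]
  ring

end Decomposition

/-- Lemma A.1 of the paper: decomposition of a symmetric matrix with zero total sum. -/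
theorem stmt1 (n : ℕ) (S : Matrix (Fin (n + 2)) (Fin (n + 2)) ℝ)
    (hS : S.IsSymm) (hsum : ∑ i, ∑ j, S i j = 0) :
    ∃! Sd : Matrix (Fin (n + 1)) (Fin (n + 1)) ℝ × (Fin (n + 1) → ℝ),
      Sd.1.IsSymm ∧
        S = embedBR Sd.1 - embedTL Sd.1 + ∑ ℓ : Fin (n + 1), Sd.2 ℓ • Emat ℓ := by
  refine ⟨(decompBlock S, decompCoeff S),
    ⟨decompBlock_isSymm hS, (assemble_decompBlock_decompCoeff hS hsum).symm⟩, ?_⟩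
  rintro ⟨T, d⟩ ⟨-, h⟩
  obtain ⟨rfl, rfl⟩ := eq_decompBlock_and_eq_decompCoeff h
  rfl
end

section
/- Let m ≥ 2, let S̃ be a real symmetric (m−1)×(m−1) matrix and d₁,…,d_{m−1} real numbers such that the matrix: (embedding of S̃ in the bottom-right block) − (embedding of S̃ in the top-left block) + Σ_{ℓ=1}^{m−1} d_ℓ E_ℓ equals the zero matrix, where E_ℓ has entries 1 at positions (1,1) and (1+ℓ,1+ℓ), −1 at positions (1,1+ℓ) and (1+ℓ,1), and 0 elsewhere. Then S̃ = 0 and d₁ = ⋯ = d_{m−1} = 0. -/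
def zeroExtend {n : ℕ} (S : Matrix (Fin (n + 1)) (Fin (n + 1)) ℝ) (i j : ℕ) : ℝ :=
  if hi : i < n + 1 then if hj : j < n + 1 then S ⟨i, hi⟩ ⟨j, hj⟩ else 0 else 0

section zeroExtend

variable {n : ℕ} (S : Matrix (Fin (n + 1)) (Fin (n + 1)) ℝ)

theorem zeroExtend_val (i j : Fin (n + 1)) : zeroExtend S i j = S i j := by
  simp [zeroExtend, i.isLt, j.isLt]

theorem zeroExtend_eq_zero_of_lt_left {i : ℕ} (hi : n < i) (j : ℕ) : zeroExtend S i j = 0 := by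
  simp [zeroExtend, show ¬ i < n + 1 by omega]

theorem zeroExtend_eq_zero_of_lt_right (i : ℕ) {j : ℕ} (hj : n < j) : zeroExtend S i j = 0 := by
  simp [zeroExtend, show ¬ j < n + 1 by omega]

theorem zeroExtend_zero : zeroExtend (0 : Matrix (Fin (n + 1)) (Fin (n + 1)) ℝ) = 0 := by
  ext i j; simp [zeroExtend]

theorem zeroExtend_diagonal_of_ne (d : Fin (n + 1) → ℝ) {i j : ℕ} (hij : i ≠ j) :
    zeroExtend (Matrix.diagonal d) i j = 0 := by
  unfold zeroExtend
  split_ifs <;> simp [Matrix.diagonal_apply_ne, Fin.ext_iff, hij]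

theorem embedTL_apply (i j : Fin (n + 2)) : embedTL S i j = zeroExtend S i j := rfl

theorem embedBR_succ_succ (i j : Fin (n + 1)) : embedBR S i.succ j.succ = S i j := by
  simp [embedBR]

theorem embedBR_zero_left (j : Fin (n + 2)) : embedBR S 0 j = 0 := by
  simp [embedBR]

theorem zeroExtend_eq_zero_of_eq_succ_succ {i j : ℕ}
    (hshift : ∀ k, zeroExtend S (i + k) (j + k) = zeroExtend S (i + k + 1) (j + k + 1)) :
    zeroExtend S i j = 0 := by
  have hconst : ∀ k, zeroExtend S i j = zeroExtend S (i + k) (j + k) := by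
    intro k
    induction k with
    | zero => rfl
    | succ k ih => rw [ih, hshift]; rfl
  rw [hconst (n + 1), zeroExtend_eq_zero_of_lt_left S (by omega)]

theorem zeroExtend_sub_zeroExtend_succ_succ_add {D : Matrix (Fin (n + 1)) (Fin (n + 1)) ℝ}
    (h : ∀ i j : Fin (n + 1), S i j - zeroExtend S (i + 1) (j + 1) + D i j = 0) (i j : ℕ) :
    zeroExtend S i j - zeroExtend S (i + 1) (j + 1) + zeroExtend D i j = 0 := by
  by_cases hi : i < n + 1
  · by_cases hj : j < n + 1
    · have := h ⟨i, hi⟩ ⟨j, hj⟩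
      rwa [← zeroExtend_val S ⟨i, hi⟩ ⟨j, hj⟩, ← zeroExtend_val D ⟨i, hi⟩ ⟨j, hj⟩] at this
    · rw [zeroExtend_eq_zero_of_lt_right S i (by omega : n < j),
        zeroExtend_eq_zero_of_lt_right S (i + 1) (by omega : n < j + 1),
        zeroExtend_eq_zero_of_lt_right D i (by omega : n < j)]
      ring
  · rw [zeroExtend_eq_zero_of_lt_left S (by omega : n < i),
      zeroExtend_eq_zero_of_lt_left S (by omega : n < i + 1),
      zeroExtend_eq_zero_of_lt_left D (by omega : n < i)]
    ring

end zeroExtend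

theorem sum_smul_Emat_succ_succ {n : ℕ} (d : Fin (n + 1) → ℝ) (i j : Fin (n + 1)) :
    (∑ ℓ, d ℓ • Emat ℓ) i.succ j.succ = Matrix.diagonal d i j := by
  simp only [Matrix.sum_apply, Matrix.smul_apply, Emat, Matrix.of_apply, Matrix.diagonal_apply,
    Fin.succ_ne_zero, false_and, and_false, or_self, Fin.succ_inj, smul_eq_mul, mul_ite, mul_one,
    mul_zero, if_false]
  rcases eq_or_ne i j with rfl | hij
  · simp
  · rw [if_neg hij]
    exact Finset.sum_eq_zero fun ℓ _ => if_neg fun ⟨hi, hj⟩ => hij (hi.trans hj.symm)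

theorem sum_smul_Emat_zero_succ {n : ℕ} (d : Fin (n + 1) → ℝ) (j : Fin (n + 1)) :
    (∑ ℓ, d ℓ • Emat ℓ) 0 j.succ = -d j := by
  simp [Matrix.sum_apply, Emat, (Fin.succ_ne_zero _).symm]

theorem stmt3_general (n : ℕ) (St : Matrix (Fin (n + 1)) (Fin (n + 1)) ℝ)
    (d : Fin (n + 1) → ℝ)
    (h : embedBR St - embedTL St + ∑ ℓ : Fin (n + 1), d ℓ • Emat ℓ = 0) :
    St = 0 ∧ d = 0 := by
  have entry (i j : Fin (n + 2)) :
      embedBR St i j - embedTL St i j + (∑ ℓ, d ℓ • Emat ℓ) i j = 0 := by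
    simpa using congrFun (congrFun h i) j
  have hshift := zeroExtend_sub_zeroExtend_succ_succ_add St fun i j => by
    have := entry i.succ j.succ
    rwa [embedBR_succ_succ, embedTL_apply, sum_smul_Emat_succ_succ, Fin.val_succ,
      Fin.val_succ] at this
  have hoff (i j : ℕ) (hij : i ≠ j) : zeroExtend St i j = 0 :=
    zeroExtend_eq_zero_of_eq_succ_succ St fun k => by
      linarith [hshift (i + k) (j + k),
        zeroExtend_diagonal_of_ne d (i := i + k) (j := j + k) (by omega)]
  have hd : d = 0 := funext fun j => by
    have := entry 0 j.succ
    rw [embedBR_zero_left, embedTL_apply, sum_smul_Emat_zero_succ, Fin.val_zero, Fin.val_succ,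
      hoff 0 (j + 1) (by omega)] at this
    simpa using this
  refine ⟨?_, hd⟩
  ext i j
  rw [← zeroExtend_val St i j]
  refine zeroExtend_eq_zero_of_eq_succ_succ St fun k => ?_
  simpa [hd, zeroExtend_zero, sub_eq_zero] using hshift (i + k) (j + k)

/-- Injectivity step in the proof of Lemma A.1 of the paper: if the decomposition
vanishes then `S̃ = 0` and all `dₗ = 0`. -/
theorem stmt3 (n : ℕ) (St : Matrix (Fin (n + 1)) (Fin (n + 1)) ℝ) (hSt : St.IsSymm)
    (d : Fin (n + 1) → ℝ)
    (h : embedBR St - embedTL St + ∑ ℓ : Fin (n + 1), d ℓ • Emat ℓ = 0) :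
    St = 0 ∧ d = 0 :=
  stmt3_general n St d h
end

section
/- Let r ≥ 1, p ≥ 0 and a_{−r},…,a_p real coefficients. Fix integers J ≥ 1 and N ≥ 1 with Np ≤ J/2. Suppose (u_j^n)_{j ≤ J+p, 0 ≤ n ≤ N} satisfies the recursion u_j^{n+1} = Σ_{ℓ=−r}^p a_ℓ u_{j+ℓ}^n for all j ≤ J and 0 ≤ n ≤ N−1 (with u_j^n for J < j ≤ J+p determined by arbitrary boundary conditions), and suppose the initial data satisfy u_j^0 = 0 for all j ≤ J/2. Then u_ℓ^n = 0 for all 0 ≤ n ≤ N and all ℓ ≤ J/2 − Np + (N−n)p; in particular u_ℓ^n = 0 for ℓ = 1−r,…,0 and all n ≤ N. -/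
open Finset

/-! A stencil reaching at most `p` cells to the right reads `u^n` only on `(-∞, j + p]` to compute
`u^{n+1}_j`, so each step shrinks a zero region `(-∞, M]` by at most `p` cells. -/

section ExplicitScheme

variable {R : Type*} [NonUnitalNonAssocSemiring R] {S : Finset ℤ} {p : ℕ} {a : ℤ → R}

theorem explicit_step_eq_zero {v w : ℤ → R} (hS : ∀ k ∈ S, k ≤ p) {J M : ℤ}
    (hstep : ∀ j ≤ J, w j = ∑ k ∈ S, a k * v (j + k)) (hv : ∀ j ≤ M, v j = 0)
    {j : ℤ} (hjJ : j ≤ J) (hjM : j ≤ M - p) : w j = 0 := by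
  rw [hstep j hjJ]
  refine sum_eq_zero fun k hk => ?_
  rw [hv (j + k) (by linarith [hS k hk]), mul_zero]

theorem explicit_scheme_eq_zero (hS : ∀ k ∈ S, k ≤ p) {u : ℕ → ℤ → R} {N : ℕ} {J L : ℤ}
    (hL : L ≤ J + p)
    (hrec : ∀ n < N, ∀ j ≤ J, u (n + 1) j = ∑ k ∈ S, a k * u n (j + k))
    (hinit : ∀ j ≤ L, u 0 j = 0) :
    ∀ n ≤ N, ∀ j ≤ L - n * p, u n j = 0 := by
  intro n
  induction n with
  | zero => intro _ j hj; exact hinit j (by simpa using hj)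
  | succ n ih =>
    intro hn j hj
    have hp : (0 : ℤ) ≤ n * p := by positivity
    push_cast at hj
    exact explicit_step_eq_zero hS (hrec n (by omega)) (ih (by omega)) (by linarith) (by linarith)

end ExplicitScheme

theorem stmt14_general (r p : ℕ) (a : ℤ → ℝ) (J N : ℕ)
    (hNp : (N : ℤ) * (p : ℤ) ≤ (J : ℤ) / 2)
    (u : ℕ → ℤ → ℝ)
    (hrec : ∀ n : ℕ, n < N → ∀ j : ℤ, j ≤ (J : ℤ) →
      u (n + 1) j = ∑ ℓ ∈ Finset.Icc (-(r : ℤ)) (p : ℤ), a ℓ * u n (j + ℓ))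
    (hinit : ∀ j : ℤ, j ≤ (J : ℤ) / 2 → u 0 j = 0) :
    (∀ n : ℕ, n ≤ N → ∀ ℓ : ℤ,
        ℓ ≤ (J : ℤ) / 2 - (N : ℤ) * p + ((N : ℤ) - (n : ℤ)) * p → u n ℓ = 0) ∧
      ∀ n : ℕ, n ≤ N → ∀ ℓ : ℤ, 1 - (r : ℤ) ≤ ℓ → ℓ ≤ 0 → u n ℓ = 0 := by
  have hvanish := explicit_scheme_eq_zero (fun k hk => (mem_Icc.1 hk).2) (L := (J : ℤ) / 2)
    (by omega) hrec hinit
  refine ⟨fun n hn ℓ hℓ => hvanish n hn ℓ (by linarith), fun n hn ℓ _ hℓ => hvanish n hn ℓ ?_⟩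
  have : (n : ℤ) * p ≤ N * p := by gcongr
  linarith

/-- Finite speed of propagation to the left: if the initial data vanish for
`j ≤ J/2`, then `u_ℓ^n = 0` for `ℓ ≤ J/2 − Np + (N−n)p`; in particular the
solution satisfies the homogeneous Dirichlet condition `u_ℓ^n = 0` for
`ℓ = 1−r,…,0` up to time `N`. -/
theorem stmt14 (r p : ℕ) (hr : 1 ≤ r) (a : ℤ → ℝ) (J N : ℕ)
    (hJ : 1 ≤ J) (hN : 1 ≤ N) (hJeven : Even J)
    (hNp : (N : ℤ) * (p : ℤ) ≤ (J : ℤ) / 2)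
    (u : ℕ → ℤ → ℝ)
    (hrec : ∀ n : ℕ, n < N → ∀ j : ℤ, j ≤ (J : ℤ) →
      u (n + 1) j = ∑ ℓ ∈ Finset.Icc (-(r : ℤ)) (p : ℤ), a ℓ * u n (j + ℓ))
    (hinit : ∀ j : ℤ, j ≤ (J : ℤ) / 2 → u 0 j = 0) :
    (∀ n : ℕ, n ≤ N → ∀ ℓ : ℤ,
        ℓ ≤ (J : ℤ) / 2 - (N : ℤ) * p + ((N : ℤ) - (n : ℤ)) * p → u n ℓ = 0) ∧
      ∀ n : ℕ, n ≤ N → ∀ ℓ : ℤ, 1 - (r : ℤ) ≤ ℓ → ℓ ≤ 0 → u n ℓ = 0 :=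
  stmt14_general r p a J N hNp u hrec hinit
end

section
/- Let a > 0, λ > 0, p ≥ 0 and let a₀,…,a_p (i.e. r = 0) be real numbers satisfying Σ_{ℓ=0}^p a_ℓ = 1, Σ_{ℓ=0}^p ℓ a_ℓ = −λa, and sup_{θ∈[0,2π]} |Σ_{ℓ=0}^p a_ℓ e^{iℓθ}| ≤ 1. Then a contradiction follows; equivalently, any ℓ²-stable conservative first-order-consistent scheme for ∂_t u + a∂_x u = 0 with a > 0 must have r ≥ 1. -/
/-!
Since the stencil is one-sided, the symbol is the restriction to the unit circle of the polynomial
`P z = ∑ c ℓ z ^ ℓ`. By the maximum modulus principle `|P| ≤ 1` on the closed unit disk, so on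
`[0, 1]` the real polynomial `P` attains its maximum `P 1 = 1` at the right endpoint. Hence
`P' 1 = ∑ ℓ c ℓ ≥ 0`, contradicting `∑ ℓ c ℓ = -λa < 0`.
-/

open Complex Metric Set

theorem norm_le_of_forall_mem_sphere_norm_le {E : Type*} [NormedAddCommGroup E] [NormedSpace ℂ E]
    {f : ℂ → E} (hf : Differentiable ℂ f) {c : ℂ} {r C : ℝ} (hr : r ≠ 0)
    (hC : ∀ z ∈ sphere c r, ‖f z‖ ≤ C) {z : ℂ} (hz : z ∈ closedBall c r) : ‖f z‖ ≤ C := by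
  refine norm_le_of_forall_mem_frontier_norm_le isBounded_ball hf.diffContOnCl
    (fun w hw => hC w ?_) (by rwa [closure_ball c hr])
  rwa [frontier_ball c hr] at hw

theorem exists_mem_Ico_exp_mul_I_eq {z : ℂ} (hz : ‖z‖ = 1) :
    ∃ θ ∈ Ico 0 (2 * Real.pi), exp (θ * I) = z := by
  have hper : Function.Periodic (fun θ : ℝ => exp (θ * I)) (2 * Real.pi) := fun θ => by
    simpa using exp_mul_I_periodic θ
  obtain ⟨θ, hθ, hexp⟩ := hper.exists_mem_Ico₀ Real.two_pi_pos (arg z)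
  refine ⟨θ, hθ, ?_⟩
  simpa [hz, ← hexp] using norm_mul_exp_arg_mul_I z

theorem IsLocalMaxOn.hasDerivAt_nonneg_of_right_endpoint {g : ℝ → ℝ} {a b g' : ℝ} (hab : a < b)
    (h : IsLocalMaxOn g (Icc a b) b) (hg : HasDerivAt g g' b) : 0 ≤ g' := by
  have hleft : a - b ∈ posTangentConeAt (Icc a b) b :=
    mem_posTangentConeAt_of_segment_subset <| by
      rw [add_sub_cancel, segment_eq_Icc' b a, min_eq_right hab.le, max_eq_left hab.le]
  have hslope := h.hasFDerivWithinAt_nonpos hg.hasFDerivAt.hasFDerivWithinAt hleft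
  simp only [ContinuousLinearMap.toSpanSingleton_apply, smul_eq_mul] at hslope
  exact nonneg_of_mul_nonpos_right hslope (sub_neg.mpr hab)

theorem sum_natCast_mul_nonneg_of_abs_sum_mul_pow_le_one {s : Finset ℕ} {c : ℕ → ℝ}
    (h0 : ∑ ℓ ∈ s, c ℓ = 1) (hbound : ∀ x ∈ Icc (0 : ℝ) 1, |∑ ℓ ∈ s, c ℓ * x ^ ℓ| ≤ 1) :
    0 ≤ ∑ ℓ ∈ s, (ℓ : ℝ) * c ℓ := by
  have hmax : IsMaxOn (fun x : ℝ => ∑ ℓ ∈ s, c ℓ * x ^ ℓ) (Icc 0 1) 1 := fun x hx => by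
    simpa [h0] using (le_abs_self _).trans (hbound x hx)
  have hderiv : HasDerivAt (fun x : ℝ => ∑ ℓ ∈ s, c ℓ * x ^ ℓ) (∑ ℓ ∈ s, (ℓ : ℝ) * c ℓ) 1 := by
    refine (HasDerivAt.fun_sum fun ℓ _ => (hasDerivAt_pow ℓ (1 : ℝ)).const_mul (c ℓ)).congr_deriv ?_
    simp only [one_pow, mul_one, mul_comm]
  exact hmax.localize.hasDerivAt_nonneg_of_right_endpoint one_pos hderiv

/-- An `ℓ²`-stable conservative first-order-consistent scheme for
`∂ₜu + a∂ₓu = 0` with `a > 0` cannot have `r = 0`: the three conditions with a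
purely right-sided stencil are contradictory. -/
theorem stmt17 (p : ℕ) (lam a : ℝ) (hlam : 0 < lam) (ha : 0 < a) (c : ℕ → ℝ)
    (h0 : ∑ ℓ ∈ Finset.range (p + 1), c ℓ = 1)
    (h1 : ∑ ℓ ∈ Finset.range (p + 1), (ℓ : ℝ) * c ℓ = -(lam * a))
    (hstab : ∀ θ ∈ Set.Icc (0 : ℝ) (2 * Real.pi),
      ‖∑ ℓ ∈ Finset.range (p + 1),
          (c ℓ : ℂ) * Complex.exp (Complex.I * (ℓ : ℂ) * (θ : ℂ))‖ ≤ 1) :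
    False := by
  set P : ℂ → ℂ := fun z => ∑ ℓ ∈ Finset.range (p + 1), (c ℓ : ℂ) * z ^ ℓ
  have hcircle : ∀ z ∈ sphere (0 : ℂ) 1, ‖P z‖ ≤ 1 := fun z hz => by
    obtain ⟨θ, hθ, rfl⟩ := exists_mem_Ico_exp_mul_I_eq (mem_sphere_zero_iff_norm.mp hz)
    convert hstab θ (Ico_subset_Icc_self hθ) using 4 with ℓ
    rw [← exp_nat_mul]
    ring_nf
  have hdisk : ∀ z ∈ closedBall (0 : ℂ) 1, ‖P z‖ ≤ 1 :=
    fun z => norm_le_of_forall_mem_sphere_norm_le (by fun_prop) one_ne_zero hcircle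
  have hinterval : ∀ x ∈ Icc (0 : ℝ) 1, |∑ ℓ ∈ Finset.range (p + 1), c ℓ * x ^ ℓ| ≤ 1 :=
    fun x hx => by
      rw [← Real.norm_eq_abs, ← norm_real]
      push_cast
      exact hdisk x (by simpa [abs_of_nonneg hx.1] using hx.2)
  have hslope := sum_natCast_mul_nonneg_of_abs_sum_mul_pow_le_one h0 hinterval
  linarith [mul_pos hlam ha]
end
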